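/- For every integer k ≥ 1 the function g_k is convex on [0,∞), and satisfies g_k(1) = 1 and g_k(k+1) = 1; consequently g_k(r) ≤ 1 for every real r ∈ [1, k+1]. -/

import Mathlib

/-!
With `s = r + 1` and `c = log (k + 1) / k`, `g_k(r)` is a positive constant times
`φ(s) = (s - (2k + 5) + 2(k + 2)² / s) e^{cs}`. The second derivative of `φ` is `e^{cs} / s³`
times a quartic in `s` which is nonnegative as soon as `2 / (4k + 9) ≤ c ≤ 2`, so `g_k` is convex;
a convex function equal to `1` at both ends of `[1, k + 1]` is at most `1` in between.
-/

/-- The function `g_k(r) = (2(k+2)(k+1−r) + r(r+1)) / ((r+1)(k+1)(k+1)^{(k+1−r)/k})`,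
where `(k+1)^{(k+1−r)/k}` is a real power (`Real.rpow`). -/
noncomputable def g (k : ℕ) (r : ℝ) : ℝ :=
  (2 * ((k : ℝ) + 2) * ((k : ℝ) + 1 - r) + r * (r + 1)) /
    ((r + 1) * ((k : ℝ) + 1) * ((k : ℝ) + 1) ^ (((k : ℝ) + 1 - r) / (k : ℝ)))

open Real Set

lemma HasDerivAt.mul_exp_const_mul {u : ℝ → ℝ} {u' x : ℝ} (c : ℝ) (hu : HasDerivAt u u' x) :
    HasDerivAt (fun s => u s * Real.exp (c * s)) ((u' + c * u x) * Real.exp (c * x)) x := by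
  have hexp : HasDerivAt (fun s => Real.exp (c * s)) (Real.exp (c * x) * c) x :=
    ((hasDerivAt_id x).const_mul c).exp.congr_deriv (by simp)
  exact (hu.mul hexp).congr_deriv (by ring)

lemma convexOn_Ici_mul_exp {a m q c : ℝ} (ha : 0 < a)
    (hP : ∀ s ∈ Ioi a,
      0 ≤ 2 * q + 2 * c * (s ^ 3 - q * s) + c ^ 2 * (s ^ 4 - m * s ^ 3 + q * s ^ 2)) :
    ConvexOn ℝ (Ici a) (fun s => (s - m + q / s) * exp (c * s)) := by
  have hu : ∀ x ≠ 0, HasDerivAt (fun s => s - m + q / s) (1 - q / x ^ 2) x := fun x hx =>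
    (((hasDerivAt_id x).sub_const m).add ((hasDerivAt_inv hx).const_mul q)).congr_deriv
      (by simp [div_eq_mul_inv, sub_eq_add_neg])
  have hu' : ∀ x ≠ 0, HasDerivAt (fun s => 1 - q / s ^ 2 + c * (s - m + q / s))
      (2 * q / x ^ 3 + c * (1 - q / x ^ 2)) x := fun x hx => by
    have hinv_sq : HasDerivAt (fun s => q / s ^ 2) (-(2 * q / x ^ 3)) x := by
      refine ((((hasDerivAt_pow 2 x).inv (pow_ne_zero 2 hx)).const_mul q).congr_deriv ?_)
        |>.congr_of_eventuallyEq ?_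
      · field_simp
        ring
      · filter_upwards with s
        simp [div_eq_mul_inv]
    exact ((hinv_sq.const_sub 1).add ((hu x hx).const_mul c)).congr_deriv (by ring)
  have hne : ∀ x ∈ Ici a, x ≠ 0 := fun x hx => (ha.trans_le hx).ne'
  refine convexOn_of_hasDerivWithinAt2_nonneg (convex_Ici a)
    (fun x hx => ((hu x (hne x hx)).mul_exp_const_mul c).continuousAt.continuousWithinAt)
    (fun x hx => ((hu x (hne x (interior_subset hx))).mul_exp_const_mul c).hasDerivWithinAt)
    (fun x hx => ((hu' x (hne x (interior_subset hx))).mul_exp_const_mul c).hasDerivWithinAt) ?_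
  rw [interior_Ici]
  intro x hx
  have hx0 : 0 < x := ha.trans hx
  have hsecond : 2 * q / x ^ 3 + c * (1 - q / x ^ 2) + c * (1 - q / x ^ 2 + c * (x - m + q / x)) =
      (2 * q + 2 * c * (x ^ 3 - q * x) + c ^ 2 * (x ^ 4 - m * x ^ 3 + q * x ^ 2)) / x ^ 3 := by
    field_simp
    ring
  rw [hsecond]
  exact mul_nonneg (div_nonneg (hP x hx) (by positivity)) (exp_pos _).le

-- The quartic equals `(K+2)²(cs-2)² + s²(2cs - (2K+5)c + 2)²/4 + s²(2-c)((4K+9)c-2)/4`.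
lemma quartic_nonneg {K c : ℝ} (hc : c ≤ 2) (hc' : 2 ≤ (4 * K + 9) * c) (s : ℝ) :
    0 ≤ 2 * (2 * (K + 2) ^ 2) + 2 * c * (s ^ 3 - 2 * (K + 2) ^ 2 * s) +
      c ^ 2 * (s ^ 4 - (2 * K + 5) * s ^ 3 + 2 * (K + 2) ^ 2 * s ^ 2) := by
  nlinarith [mul_nonneg (sq_nonneg (K + 2)) (sq_nonneg (c * s - 2)),
    sq_nonneg (s * (2 * c * s - (2 * K + 5) * c + 2)),
    mul_nonneg (mul_nonneg (sq_nonneg s) (sub_nonneg.2 hc)) (sub_nonneg.2 hc')]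

lemma log_add_one_div_le_one {K : ℝ} (hK : 0 < K) : log (K + 1) / K ≤ 1 := by
  rw [div_le_one hK]
  linarith [log_le_sub_one_of_pos (by linarith : 0 < K + 1)]

lemma two_le_mul_log_add_one_div {K : ℝ} (hK : 1 ≤ K) :
    2 ≤ (4 * K + 9) * (log (K + 1) / K) := by
  have hlog : log 2 ≤ log (K + 1) := log_le_log two_pos (by linarith)
  have hfour_log : 4 * log (K + 1) ≤ (4 * K + 9) * (log (K + 1) / K) := by
    rw [mul_div_assoc', le_div_iff₀ (by linarith)]
    nlinarith [log_nonneg (by linarith : (1 : ℝ) ≤ K + 1)]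
  linarith [log_two_gt_d9]

lemma g_eq_mul_exp {k : ℕ} (hk : k ≠ 0) {r : ℝ} (hr : r + 1 ≠ 0) :
    g k r = ((k + 1) * exp (log (k + 1) / k * (k + 2)))⁻¹ *
      ((r + 1 - (2 * k + 5) + 2 * (k + 2) ^ 2 / (r + 1)) * exp (log (k + 1) / k * (r + 1))) := by
  have hk' : (k : ℝ) ≠ 0 := Nat.cast_ne_zero.2 hk
  have hpow : ((k : ℝ) + 1) ^ (((k : ℝ) + 1 - r) / k) =
      exp (log (k + 1) / k * (k + 2)) / exp (log (k + 1) / k * (r + 1)) := by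
    rw [rpow_def_of_pos (by positivity), ← exp_sub]
    congr 1
    field_simp
    ring
  rw [g, hpow]
  field_simp
  ring

lemma convexOn_g {k : ℕ} (hk : 1 ≤ k) : ConvexOn ℝ (Ici 0) (g k) := by
  have hK : (1 : ℝ) ≤ k := by exact_mod_cast hk
  set c := log ((k : ℝ) + 1) / k
  have hφ : ConvexOn ℝ (Ici 1)
      (fun s => (s - (2 * k + 5) + 2 * (k + 2) ^ 2 / s) * exp (c * s)) :=
    convexOn_Ici_mul_exp one_pos fun s _ =>
      quartic_nonneg ((log_add_one_div_le_one (by linarith)).trans one_le_two)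
        (two_le_mul_log_add_one_div hK) s
  have hshift := (hφ.translate_right 1).smul
    (c := ((k + 1) * exp (c * (k + 2)))⁻¹) (by positivity)
  rw [preimage_const_add_Ici, sub_self] at hshift
  refine hshift.congr fun r hr => ?_
  rw [g_eq_mul_exp (by omega) (by linarith [mem_Ici.1 hr])]
  simp only [Function.comp, smul_eq_mul, add_comm (1 : ℝ) r, c]

lemma g_one (k : ℕ) : g k 1 = 1 := by
  rcases eq_or_ne k 0 with rfl | hk
  · norm_num [g]
  · rw [g, add_sub_cancel_right, div_self (Nat.cast_ne_zero.2 hk), rpow_one,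
      div_eq_one_iff_eq (by positivity)]
    ring

lemma g_add_one (k : ℕ) : g k (k + 1) = 1 := by
  rw [g, sub_self, zero_div, rpow_zero, div_eq_one_iff_eq (by positivity)]
  ring

/-- For every integer `k ≥ 1`, the function `g_k` is convex on `[0,∞)`
and satisfies `g_k(1) = 1` and `g_k(k+1) = 1`; consequently `g_k(r) ≤ 1` for every
`r ∈ [1, k+1]`. -/
theorem stmt16 (k : ℕ) (hk : 1 ≤ k) :
    ConvexOn ℝ (Set.Ici (0 : ℝ)) (g k) ∧
    g k 1 = 1 ∧
    g k ((k : ℝ) + 1) = 1 ∧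
    ∀ r ∈ Set.Icc (1 : ℝ) ((k : ℝ) + 1), g k r ≤ 1 := by
  have hconv := convexOn_g hk
  refine ⟨hconv, g_one k, g_add_one k, fun r hr => ?_⟩
  have hseg : r ∈ segment ℝ 1 ((k : ℝ) + 1) := by
    rwa [segment_eq_Icc (hr.1.trans hr.2)]
  simpa [g_one, g_add_one] using
    hconv.le_on_segment (by norm_num) (mem_Ici.2 (by positivity)) hseg
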